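/- Let L ∈ G(d,k) with 1 ≤ k < d, and let f : ℝ^d → [0,∞) be measurable. For any δ-plate L_δ(a) (the δ-neighborhood of (L + a) ∩ B(a,1/2)) and any r ∈ [1,∞], ∫_{L_δ(a)} f dx ≤ C δ^{(d-k)/r'} ( ∫_{L^⊥} ( ∫_{L+y} f(x) dLeb^k(x) )^r dLeb^{d-k}(y) )^{1/r}, where r' is the conjugate exponent of r and C depends only on d. -/

import Mathlib

/-! The orthogonal projection onto `Lᗮ` maps the plate `L_δ(a)` into a ball `B` of radius `δ`.
Fubini over `E = L ⊕ Lᗮ` bounds the integral of `f` over the plate by the integral over `B` of the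
`k`-plane transform `y ↦ ∫_{L + y} f`, and Hölder's inequality on `B` produces the factor
`vol(B)^{1/r'} = (ω_{d-k} δ^{d-k})^{1/r'}`. -/

open MeasureTheory Set Metric ENNReal

noncomputable section

abbrev Ed (d : ℕ) := EuclideanSpace ℝ (Fin d)

instance (d : ℕ) : MeasurableSpace (Submodule ℝ (Ed d)) := ⊤

/-- `γ` is the invariant probability measure on the Grassmannian `G(d,k)`. -/
def IsGrassmannianMeasure (d k : ℕ) (γ : Measure (Submodule ℝ (Ed d))) : Prop :=
  IsProbabilityMeasure γ ∧
    (∀ θ : Ed d ≃ₗᵢ[ℝ] Ed d,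
      Measure.map (fun L => Submodule.map (θ.toLinearEquiv : Ed d →ₗ[ℝ] Ed d) L) γ = γ) ∧
    γ {L | Module.finrank ℝ L = k}ᶜ = 0

/-- The `δ`-plate `L_δ(a)`: the `δ`-neighborhood of `(L + a) ∩ B(a, 1/2)`. -/
def plate (d : ℕ) (L : Submodule ℝ (Ed d)) (δ : ℝ) (a : Ed d) : Set (Ed d) :=
  Metric.thickening δ ({x | x - a ∈ L} ∩ Metric.closedBall a (1 / 2))

/-- The plate-average maximal operator `M^k_δ`. -/
def maxOp (d : ℕ) (δ : ℝ) (f : Ed d → ℝ≥0∞) (L : Submodule ℝ (Ed d)) : ℝ≥0∞ :=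
  ⨆ a : Ed d, (volume (plate d L δ a))⁻¹ * ∫⁻ x in plate d L δ a, f x

theorem Real.rpow_le_max_one {x s : ℝ} (hx : 0 ≤ x) (hs0 : 0 ≤ s) (hs1 : s ≤ 1) :
    x ^ s ≤ max x 1 := by
  rcases le_total x 1 with h | h
  · exact (Real.rpow_le_one hx h hs0).trans (le_max_right _ _)
  · calc x ^ s ≤ x ^ (1 : ℝ) := Real.rpow_le_rpow_of_exponent_le h hs1
      _ = x := Real.rpow_one x
      _ ≤ max x 1 := le_max_left _ _

def unitBallVolume (n : ℕ) : ℝ := √Real.pi ^ n / Real.Gamma (n / 2 + 1)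

theorem setLIntegral_le_measure_rpow_mul_lintegral_rpow {α : Type*} [MeasurableSpace α]
    {μ : Measure α} {g : α → ℝ≥0∞} (hg : AEMeasurable g μ) (s : Set α) {r : ℝ} (hr : 1 ≤ r) :
    ∫⁻ y in s, g y ∂μ ≤ μ s ^ (1 - 1 / r) * (∫⁻ y, g y ^ r ∂μ) ^ (1 / r) := by
  have hHolder := eLpNorm'_le_eLpNorm'_mul_rpow_measure_univ one_pos hr
    (hg.restrict (s := s)).aestronglyMeasurable
  simp only [eLpNorm', enorm_eq_self, ENNReal.rpow_one, div_one, Measure.restrict_apply_univ]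
    at hHolder
  calc ∫⁻ y in s, g y ∂μ
      ≤ (∫⁻ y in s, g y ^ r ∂μ) ^ (1 / r) * μ s ^ (1 - 1 / r) := hHolder
    _ ≤ μ s ^ (1 - 1 / r) * (∫⁻ y, g y ^ r ∂μ) ^ (1 / r) := by
      rw [mul_comm]
      gcongr
      exact Measure.restrict_le_self

section InnerProductSpace

variable {E : Type*} [NormedAddCommGroup E] [InnerProductSpace ℝ E]

theorem thickening_subset_preimage_ball_orthogonalProjectionOnto (K : Submodule ℝ E)
    [K.HasOrthogonalProjection] (a : E) (δ : ℝ) :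
    thickening δ {x | x - a ∈ K} ⊆
      Kᗮ.orthogonalProjectionOnto ⁻¹' ball (Kᗮ.orthogonalProjectionOnto a) δ := by
  intro x hx
  obtain ⟨s, hs, hxs⟩ := mem_thickening_iff.mp hx
  have hsa : Kᗮ.orthogonalProjectionOnto s = Kᗮ.orthogonalProjectionOnto a := by
    rw [← sub_eq_zero, ← map_sub, Submodule.orthogonalProjectionOnto_eq_zero_iff]
    exact K.le_orthogonal_orthogonal hs
  rw [mem_preimage, mem_ball, ← hsa]
  calc dist (Kᗮ.orthogonalProjectionOnto x) (Kᗮ.orthogonalProjectionOnto s)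
      ≤ 1 * dist x s := Kᗮ.lipschitzWith_orthogonalProjectionOnto.dist_le_mul x s
    _ < δ := by rwa [one_mul]

variable [FiniteDimensional ℝ E] [MeasurableSpace E] [BorelSpace E]

theorem lintegral_eq_lintegral_orthogonal_lintegral (K : Submodule ℝ E) {f : E → ℝ≥0∞}
    (hf : Measurable f) :
    ∫⁻ x, f x = ∫⁻ y : Kᗮ, ∫⁻ x : K, f (x + y) := by
  have hΦ := (K.orthogonalDecomposition.symm.measurePreserving).comp
    (WithLp.volume_preserving_toLp K Kᗮ)
  rw [← hΦ.lintegral_comp hf, Measure.volume_eq_prod, lintegral_prod_symm]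
  · rfl
  · exact (hf.comp hΦ.measurable).aemeasurable

theorem setLIntegral_preimage_orthogonalProjectionOnto (K : Submodule ℝ E) {f : E → ℝ≥0∞}
    (hf : Measurable f) {B : Set Kᗮ} (hB : MeasurableSet B) :
    ∫⁻ x in Kᗮ.orthogonalProjectionOnto ⁻¹' B, f x = ∫⁻ y in B, ∫⁻ x : K, f (x + y) := by
  have hP : ∀ (x : K) (y : Kᗮ), Kᗮ.orthogonalProjectionOnto (x + y) = y := fun x y => by
    rw [map_add, Submodule.orthogonalProjectionOnto_mem_subspace_eq_self,
      Submodule.orthogonalProjectionOnto_apply_of_mem_orthogonal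
        (K.le_orthogonal_orthogonal x.2), zero_add]
  have hPB := hB.preimage Kᗮ.orthogonalProjectionOnto.continuous.measurable
  rw [← lintegral_indicator hPB, lintegral_eq_lintegral_orthogonal_lintegral K (hf.indicator hPB),
    ← lintegral_indicator hB]
  congr 1 with y
  by_cases hy : y ∈ B <;> simp [indicator, hP, hy]

theorem volume_ball_rpow_le [Nontrivial E] (x : E) {δ : ℝ} (hδ : 0 ≤ δ) {s : ℝ} (hs0 : 0 ≤ s)
    (hs1 : s ≤ 1) :
    volume (ball x δ) ^ s ≤
      ENNReal.ofReal (max (unitBallVolume (Module.finrank ℝ E)) 1 *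
        δ ^ (Module.finrank ℝ E * s)) := by
  have hω : 0 ≤ unitBallVolume (Module.finrank ℝ E) := by
    unfold unitBallVolume; positivity
  rw [InnerProductSpace.volume_ball, ← ENNReal.ofReal_pow hδ, ← unitBallVolume,
    ← ENNReal.ofReal_mul (by positivity), ENNReal.ofReal_rpow_of_nonneg (by positivity) hs0,
    Real.mul_rpow (by positivity) hω, ← Real.rpow_natCast, ← Real.rpow_mul hδ, mul_comm]
  gcongr
  exact Real.rpow_le_max_one hω hs0 hs1

end InnerProductSpace

theorem plate_subset_preimage_ball (d : ℕ) (L : Submodule ℝ (Ed d)) (δ : ℝ) (a : Ed d) :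
    plate d L δ a ⊆ Lᗮ.orthogonalProjectionOnto ⁻¹' ball (Lᗮ.orthogonalProjectionOnto a) δ :=
  (thickening_subset_of_subset δ inter_subset_left).trans
    (thickening_subset_preimage_ball_orthogonalProjectionOnto L a δ)

-- `((d:ℝ) - k) * (1 - 1 / r)` is the paper's exponent `(d - k) / r'`.
theorem stmt_7 (d k : ℕ) (hkd : k < d) :
    ∃ C > (0:ℝ), ∀ (L : Submodule ℝ (Ed d)), Module.finrank ℝ L = k →
      ∀ (δ : ℝ), 0 < δ → ∀ a : Ed d, ∀ r : ℝ, 1 ≤ r →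
      ∀ f : Ed d → ℝ≥0∞, Measurable f →
        (∫⁻ x in plate d L δ a, f x)
          ≤ ENNReal.ofReal (C * δ ^ (((d:ℝ) - k) * (1 - 1 / r))) *
            (∫⁻ y : (Lᗮ : Submodule ℝ (Ed d)),
              (∫⁻ x : (L : Submodule ℝ (Ed d)), f ((x : Ed d) + (y : Ed d))) ^ r) ^ (1 / r) := by
  refine ⟨max (unitBallVolume (d - k)) 1, lt_max_of_lt_right one_pos, ?_⟩
  intro L hL δ hδ a r hr f hf
  have hdim : Module.finrank ℝ Lᗮ = d - k := by
    have := L.finrank_add_finrank_orthogonal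
    rw [hL, finrank_euclideanSpace_fin] at this
    omega
  have : Nontrivial Lᗮ := Module.nontrivial_of_finrank_pos (R := ℝ) (by omega)
  have hr0 : 0 < r := one_pos.trans_le hr
  have hs0 : 0 ≤ 1 - 1 / r := sub_nonneg.mpr ((div_le_one hr0).mpr hr)
  have hs1 : 1 - 1 / r ≤ 1 := sub_le_self _ (by positivity)
  have hg : Measurable fun y : Lᗮ => ∫⁻ x : L, f (x + y) :=
    Measurable.lintegral_prod_right (hf.comp (by fun_prop))
  have hvol := volume_ball_rpow_le (Lᗮ.orthogonalProjectionOnto a) hδ.le hs0 hs1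
  rw [hdim, Nat.cast_sub hkd.le] at hvol
  calc ∫⁻ x in plate d L δ a, f x
      ≤ ∫⁻ x in Lᗮ.orthogonalProjectionOnto ⁻¹' ball (Lᗮ.orthogonalProjectionOnto a) δ, f x :=
        lintegral_mono_set (plate_subset_preimage_ball d L δ a)
    _ = ∫⁻ y in ball (Lᗮ.orthogonalProjectionOnto a) δ, ∫⁻ x : L, f (x + y) :=
        setLIntegral_preimage_orthogonalProjectionOnto L hf measurableSet_ball
    _ ≤ volume (ball (Lᗮ.orthogonalProjectionOnto a) δ) ^ (1 - 1 / r) *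
          (∫⁻ y : Lᗮ, (∫⁻ x : L, f (x + y)) ^ r) ^ (1 / r) :=
        setLIntegral_le_measure_rpow_mul_lintegral_rpow hg.aemeasurable _ hr
    _ ≤ _ := by gcongr
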